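/- arXiv:1504.07567 — 10 statements merged into one kernel-verified Lean document; each statement's English description precedes it below -/
import Mathlib

section
/- Let m be a positive natural number, C an m×m integer matrix, and s an integer with s ≠ 1 and s ≠ −1 such that s divides every entry C i j. Then the cokernel coker(C) = (Fin m → ℤ) ⧸ LinearMap.range C.mulVecLin cannot be generated as a ℤ-module by fewer than m elements: for every finite subset S of coker(C) whose ℤ-span is the whole module, m ≤ S.card. -/
/-- If every entry of the `m × m` integer matrix `C` is divisible by an integer `s ≠ ±1`,
then the cokernel of `C` cannot be generated by fewer than `m` elements. -/
theorem rank_coker_of_common_divisor (m : ℕ) (hm : 0 < m)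
    (C : Matrix (Fin m) (Fin m) ℤ) (s : ℤ) (hs1 : s ≠ 1) (hs2 : s ≠ -1)
    (hdvd : ∀ i j, s ∣ C i j) :
    ∀ S : Finset ((Fin m → ℤ) ⧸ LinearMap.range C.mulVecLin),
      Submodule.span ℤ (S : Set ((Fin m → ℤ) ⧸ LinearMap.range C.mulVecLin)) = ⊤ →
        m ≤ S.card := by
  intro S hS
  -- get a prime divisor of s
  have hna : s.natAbs ≠ 1 := by
    intro h
    rcases Int.natAbs_eq_iff.mp h with h | h
    · exact hs1 (by simpa using h)
    · exact hs2 (by simpa using h)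
  obtain ⟨p, hp, hps⟩ := Int.exists_prime_and_dvd hna
  set n : ℕ := p.natAbs with hn
  have hnp : n.Prime := Int.prime_iff_natAbs_prime.mp hp
  haveI : Fact n.Prime := ⟨hnp⟩
  -- reduction mod n
  let π : (Fin m → ℤ) →ₗ[ℤ] (Fin m → ZMod n) :=
    LinearMap.compLeft (Int.castRingHom (ZMod n)).toIntLinearMap (Fin m)
  have hker : LinearMap.range C.mulVecLin ≤ LinearMap.ker π := by
    rintro x ⟨v, rfl⟩
    ext i
    show ((C.mulVec v i : ℤ) : ZMod n) = 0
    have : ∀ j, ((C i j : ZMod n)) = 0 := by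
      intro j
      rw [ZMod.intCast_zmod_eq_zero_iff_dvd]
      have hpd : p ∣ C i j := hps.trans (hdvd i j)
      have : (n : ℤ) ∣ p := by
        rcases Int.natAbs_eq p with h | h
        · exact ⟨1, by simpa [hn] using h⟩
        · exact ⟨-1, by rw [h]; ring⟩
      exact this.trans hpd
    simp [Matrix.mulVec, dotProduct, Int.cast_sum, this]
  let q := Submodule.liftQ (LinearMap.range C.mulVecLin) π hker
  have hπsurj : Function.Surjective π := by
    intro y
    refine ⟨fun i => ((y i).val : ℤ), funext fun i => ?_⟩
    show ((((y i).val : ℤ)) : ZMod n) = y i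
    push_cast
    simp [ZMod.natCast_val, ZMod.cast_id]
  have hqsurj : Function.Surjective q := by
    intro y
    obtain ⟨x, hx⟩ := hπsurj y
    exact ⟨Submodule.Quotient.mk x, hx⟩
  -- image of S spans over ℤ
  have hspan : Submodule.span ℤ ((S.image q : Finset (Fin m → ZMod n)) : Set (Fin m → ZMod n)) = ⊤ := by
    rw [Finset.coe_image, ← Submodule.map_span, hS, Submodule.map_top,
      LinearMap.range_eq_top.mpr hqsurj]
  -- hence spans over ZMod n
  have hspan' : Submodule.span (ZMod n) ((S.image q : Finset (Fin m → ZMod n)) : Set (Fin m → ZMod n)) = ⊤ := by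
    have hle : (⊤ : Submodule ℤ (Fin m → ZMod n)) ≤
        (Submodule.span (ZMod n) ((S.image q : Finset (Fin m → ZMod n)) : Set (Fin m → ZMod n))).restrictScalars ℤ :=
      hspan ▸ Submodule.span_le.mpr Submodule.subset_span
    exact eq_top_iff.mpr fun x _ => hle trivial
  have h1 : Module.finrank (ZMod n) (Fin m → ZMod n) ≤ (S.image q).card := by
    have h := finrank_span_finset_le_card (R := ZMod n) (S.image q)
    rwa [Set.finrank, hspan', finrank_top] at h
  have h2 : Module.finrank (ZMod n) (Fin m → ZMod n) = m := Module.finrank_fin_fun (ZMod n)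
  calc m = Module.finrank (ZMod n) (Fin m → ZMod n) := h2.symm
    _ ≤ (S.image q).card := h1
    _ ≤ S.card := Finset.card_image_le
end

section
/- Let A be a 2×2 integer matrix with det A = 1, and suppose there exists an integer s with s ∉ {1, −1, 2, −2} such that s divides every entry of A − 1 (equivalently, the first elementary divisor n₁ of A − 1 is not 1 or 2). Then for every natural number n ≥ 2, the ℤ-module ℤ × coker(Aⁿ − 1) has minimal number of generators equal to 3: there exists a spanning finite set of cardinality 3, and every finite subset whose ℤ-span is the whole module has cardinality at least 3. -/
open Matrix

/-- If all entries of `B` are divisible by a prime `p`, then `ℤ × coker B` has minimal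
number of generators `3`. -/
theorem aux_rank_three (p : ℕ) (hp : p.Prime) (B : Matrix (Fin 2) (Fin 2) ℤ)
    (hB : ∀ i j, (p : ℤ) ∣ B i j) :
    (∃ S : Finset (ℤ × ((Fin 2 → ℤ) ⧸ LinearMap.range B.mulVecLin)),
        S.card = 3 ∧
        Submodule.span ℤ (S : Set (ℤ × ((Fin 2 → ℤ) ⧸ LinearMap.range B.mulVecLin))) = ⊤) ∧
      ∀ S : Finset (ℤ × ((Fin 2 → ℤ) ⧸ LinearMap.range B.mulVecLin)),
        Submodule.span ℤ (S : Set (ℤ × ((Fin 2 → ℤ) ⧸ LinearMap.range B.mulVecLin))) = ⊤ →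
          3 ≤ S.card := by
  classical
  haveI : Fact p.Prime := ⟨hp⟩
  set Q := (Fin 2 → ℤ) ⧸ LinearMap.range B.mulVecLin with hQ
  -- the coordinatewise reduction map
  set q : (Fin 2 → ℤ) →ₗ[ℤ] (Fin 2 → ZMod p) :=
    LinearMap.pi fun i =>
      ((Int.castRingHom (ZMod p)).toAddMonoidHom.toIntLinearMap).comp (LinearMap.proj i) with hq
  have hqapp : ∀ (v : Fin 2 → ℤ) i, q v i = ((v i : ℤ) : ZMod p) := by
    intro v i; rfl
  have hker : LinearMap.range B.mulVecLin ≤ LinearMap.ker q := by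
    rintro x ⟨v, rfl⟩
    rw [LinearMap.mem_ker]
    funext i
    rw [hqapp]
    simp only [mulVecLin_apply, mulVec, dotProduct]
    push_cast
    refine Finset.sum_eq_zero fun j _ => ?_
    rw [(ZMod.intCast_zmod_eq_zero_iff_dvd _ _).mpr (hB i j), zero_mul]
  set qbar : Q →ₗ[ℤ] (Fin 2 → ZMod p) := Submodule.liftQ _ q hker with hqbar
  have hqbar_mk : ∀ v : Fin 2 → ℤ, qbar (Submodule.Quotient.mk v) = q v := fun v => rfl
  constructor
  · -- upper bound: explicit generating set of cardinality 3
    set e0 : Q := Submodule.Quotient.mk (Pi.single 0 1) with he0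
    set e1 : Q := Submodule.Quotient.mk (Pi.single 1 1) with he1
    refine ⟨{(1, 0), (0, e0), (0, e1)}, ?_, ?_⟩
    · have h01 : e0 ≠ e1 := by
        intro h
        have := congrFun (hqbar_mk (Pi.single 0 1) ▸ hqbar_mk (Pi.single 1 1) ▸ congrArg qbar h) 0
        rw [hqapp, hqapp] at this
        simp [Pi.single_apply] at this
      rw [Finset.card_insert_of_notMem, Finset.card_insert_of_notMem, Finset.card_singleton]
      · simp [h01]
      · simp
    · rw [eq_top_iff]
      rintro ⟨a, y⟩ -
      obtain ⟨v, rfl⟩ := Submodule.Quotient.mk_surjective _ y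
      have hv : (Submodule.Quotient.mk v : Q) = v 0 • e0 + v 1 • e1 := by
        rw [he0, he1, ← Submodule.Quotient.mk_smul, ← Submodule.Quotient.mk_smul,
          ← Submodule.Quotient.mk_add]
        congr 1
        funext i
        fin_cases i <;> simp
      have : ((a, Submodule.Quotient.mk v) : ℤ × Q)
          = a • ((1 : ℤ), (0 : Q)) + v 0 • ((0 : ℤ), e0) + v 1 • ((0 : ℤ), e1) := by
        rw [Prod.ext_iff]
        constructor
        · simp
        · simpa using hv
      rw [this]
      refine add_mem (add_mem ?_ ?_) ?_ <;>
        exact Submodule.smul_mem _ _ (Submodule.subset_span (by simp))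
  · -- lower bound
    intro S hS
    set F : (ℤ × Q) →ₗ[ℤ] (ZMod p × (Fin 2 → ZMod p)) :=
      LinearMap.prodMap ((Int.castRingHom (ZMod p)).toAddMonoidHom.toIntLinearMap) qbar with hF
    have hFsurj : Function.Surjective F := by
      rintro ⟨a, w⟩
      obtain ⟨x, hx⟩ := ZMod.intCast_surjective a
      refine ⟨(x, Submodule.Quotient.mk fun i => (w i).val), ?_⟩
      rw [hF]
      ext
      · simpa using hx
      · rename_i i
        simp only [LinearMap.prodMap_apply, hqbar_mk, hqapp]
        simp
    have hspan : Submodule.span ℤ (F '' S) = ⊤ := by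
      rw [Submodule.span_image, hS, Submodule.map_top, LinearMap.range_eq_top.mpr hFsurj]
    have hcoe : ((S.image F : Finset (ZMod p × (Fin 2 → ZMod p))) : Set (ZMod p × (Fin 2 → ZMod p))) = ⇑F '' ↑S := Finset.coe_image
    have hspanK : Submodule.span (ZMod p) ((S.image F : Finset (ZMod p × (Fin 2 → ZMod p))) : Set (ZMod p × (Fin 2 → ZMod p))) = ⊤ := by
      rw [hcoe, Submodule.eq_top_iff']
      intro x
      exact Submodule.span_le_restrictScalars ℤ (ZMod p) (⇑F '' ↑S)
        (hspan ▸ Submodule.mem_top)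
    have h3 : Module.finrank (ZMod p) (ZMod p × (Fin 2 → ZMod p)) = 3 := by
      simp [Module.finrank_prod]
    calc 3 = Module.finrank (ZMod p) (ZMod p × (Fin 2 → ZMod p)) := h3.symm
      _ = Set.finrank (ZMod p) ((S.image F : Finset (ZMod p × (Fin 2 → ZMod p))) : Set (ZMod p × (Fin 2 → ZMod p))) := by
          rw [Set.finrank, hspanK, finrank_top]
      _ ≤ (S.image F).card := finrank_span_finset_le_card _
      _ ≤ S.card := Finset.card_image_le

/-- If `A ∈ SL(2,ℤ)` and some integer `s ∉ {1, -1, 2, -2}` divides every entry of `A - 1`,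
then for every `n ≥ 2` the ℤ-module `ℤ × coker(Aⁿ - 1)` has minimal number
of generators equal to `3`. -/
theorem rank_three_of_not_double_branched (A : Matrix (Fin 2) (Fin 2) ℤ) (hA : A.det = 1)
    (hs : ∃ s : ℤ, s ≠ 1 ∧ s ≠ -1 ∧ s ≠ 2 ∧ s ≠ -2 ∧ ∀ i j, s ∣ (A - 1) i j) :
    ∀ n : ℕ, 2 ≤ n →
      (∃ S : Finset (ℤ × ((Fin 2 → ℤ) ⧸ LinearMap.range (A ^ n - 1).mulVecLin)),
        S.card = 3 ∧
        Submodule.span ℤ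
          (S : Set (ℤ × ((Fin 2 → ℤ) ⧸ LinearMap.range (A ^ n - 1).mulVecLin))) = ⊤) ∧
      ∀ S : Finset (ℤ × ((Fin 2 → ℤ) ⧸ LinearMap.range (A ^ n - 1).mulVecLin)),
        Submodule.span ℤ
          (S : Set (ℤ × ((Fin 2 → ℤ) ⧸ LinearMap.range (A ^ n - 1).mulVecLin))) = ⊤ →
          3 ≤ S.card := by
  obtain ⟨s, h1, h1', h2, h2', hdvd⟩ := hs
  intro n hn
  set p := s.natAbs.minFac with hp_def
  have hpp : p.Prime := Nat.minFac_prime (by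
    intro h
    rcases Int.natAbs_eq_iff.mp h with h | h <;> simp_all)
  haveI : Fact p.Prime := ⟨hpp⟩
  have hps : (p : ℤ) ∣ s :=
    (Int.natCast_dvd_natCast.mpr s.natAbs.minFac_dvd).trans (Int.natAbs_dvd.mpr dvd_rfl)
  have hBdvd : ∀ i j, (p : ℤ) ∣ (A ^ n - 1) i j := by
    set φ : Matrix (Fin 2) (Fin 2) ℤ →+* Matrix (Fin 2) (Fin 2) (ZMod p) :=
      (Int.castRingHom (ZMod p)).mapMatrix with hφ
    have hφA : φ A = 1 := by
      have h0 : φ (A - 1) = 0 := by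
        ext i j
        have : ((A - 1) i j : ZMod p) = 0 :=
          (ZMod.intCast_zmod_eq_zero_iff_dvd _ _).mpr (hps.trans (hdvd i j))
        simpa [hφ, RingHom.mapMatrix_apply, Matrix.map_apply] using this
      rw [map_sub, _root_.map_one, sub_eq_zero] at h0
      exact h0
    intro i j
    have hz : φ (A ^ n - 1) = 0 := by
      rw [map_sub, map_pow, hφA, one_pow, _root_.map_one, sub_self]
    have : ((A ^ n - 1) i j : ZMod p) = 0 := by
      have := congrFun (congrFun hz i) j
      simpa [hφ, RingHom.mapMatrix_apply, Matrix.map_apply] using this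
    exact (ZMod.intCast_zmod_eq_zero_iff_dvd _ _).mp this
  exact aux_rank_three p hpp (A ^ n - 1) hBdvd
end

section
/- Let α be an integer with 2 ≤ |α| and let B = !![1, α; 0, 1]. Then the ℤ-module ℤ × coker(B − 1) has minimal number of generators equal to 3: there exists a spanning finite set of cardinality 3, and every finite subset whose ℤ-span is the whole module has cardinality at least 3. -/
set_option maxHeartbeats 1000000

private lemma mulVec_eq (α : ℤ) (w : Fin 2 → ℤ) :
    ((!![1, α; 0, 1] : Matrix (Fin 2) (Fin 2) ℤ) - 1).mulVecLin w = ![α * w 1, 0] := by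
  funext i
  fin_cases i <;>
    simp [Matrix.mulVecLin, Matrix.mulVec, dotProduct, Fin.sum_univ_two,
      Matrix.one_apply]

private def φ (p : ℕ) : (Fin 2 → ℤ) →ₗ[ℤ] (Fin 2 → ZMod p) where
  toFun v := fun i => (v i : ZMod p)
  map_add' v w := by funext i; simp
  map_smul' c v := by funext i; simp [zsmul_eq_mul]

private lemma range_le_ker (α : ℤ) (p : ℕ) (hp : (p : ℤ) ∣ α) :
    LinearMap.range ((!![1, α; 0, 1] : Matrix (Fin 2) (Fin 2) ℤ) - 1).mulVecLin ≤
      LinearMap.ker (φ p) := by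
  rintro x ⟨w, rfl⟩
  rw [LinearMap.mem_ker, mulVec_eq]
  funext i
  fin_cases i <;> simp [φ, (ZMod.intCast_zmod_eq_zero_iff_dvd α p).2 hp]

/-- For `B = !![1, α; 0, 1]` with `|α| ≥ 2`, the ℤ-module `ℤ × coker(B - 1)` has minimal
number of generators equal to `3`. -/
theorem rank_three_parabolic_plus (α : ℤ) (hα : 2 ≤ |α|) :
    (∃ S : Finset (ℤ × ((Fin 2 → ℤ) ⧸
        LinearMap.range ((!![1, α; 0, 1] : Matrix (Fin 2) (Fin 2) ℤ) - 1).mulVecLin)),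
      S.card = 3 ∧
      Submodule.span ℤ (S : Set (ℤ × ((Fin 2 → ℤ) ⧸
        LinearMap.range ((!![1, α; 0, 1] : Matrix (Fin 2) (Fin 2) ℤ) - 1).mulVecLin))) = ⊤) ∧
    ∀ S : Finset (ℤ × ((Fin 2 → ℤ) ⧸
        LinearMap.range ((!![1, α; 0, 1] : Matrix (Fin 2) (Fin 2) ℤ) - 1).mulVecLin)),
      Submodule.span ℤ (S : Set (ℤ × ((Fin 2 → ℤ) ⧸
        LinearMap.range ((!![1, α; 0, 1] : Matrix (Fin 2) (Fin 2) ℤ) - 1).mulVecLin))) = ⊤ →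
        3 ≤ S.card := by
  classical
  set R := LinearMap.range ((!![1, α; 0, 1] : Matrix (Fin 2) (Fin 2) ℤ) - 1).mulVecLin with hR
  constructor
  · -- upper bound: explicit generating set
    refine ⟨{(1, 0), (0, R.mkQ (Pi.single 0 1)), (0, R.mkQ (Pi.single 1 1))}, ?_, ?_⟩
    · -- cardinality 3
      have hne : R.mkQ (Pi.single 0 1) ≠ R.mkQ (Pi.single 1 1) := by
        intro h
        have h' : (Pi.single 0 1 - Pi.single 1 1 : Fin 2 → ℤ) ∈ R :=
          (Submodule.Quotient.eq R).1 h
        obtain ⟨w, hw⟩ := h'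
        have := congrFun ((mulVec_eq α w).symm.trans hw) 1
        simp [Pi.single] at this
      rw [Finset.card_insert_of_notMem, Finset.card_insert_of_notMem, Finset.card_singleton]
      · intro h
        rw [Finset.mem_singleton] at h
        exact hne (congrArg Prod.snd h)
      · simp only [Finset.mem_insert, Finset.mem_singleton]
        rintro (h | h) <;> exact one_ne_zero (congrArg Prod.fst h)
    · -- spanning
      rw [Submodule.eq_top_iff']
      rintro ⟨n, q⟩
      obtain ⟨v, rfl⟩ := R.mkQ_surjective q
      have hv : v = v 0 • (Pi.single 0 1 : Fin 2 → ℤ) + v 1 • Pi.single 1 1 := by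
        funext i; fin_cases i <;> simp [Pi.single]
      have key : ((n, R.mkQ v) : ℤ × ((Fin 2 → ℤ) ⧸ R)) =
          n • ((1, 0) : ℤ × ((Fin 2 → ℤ) ⧸ R)) + v 0 • (0, R.mkQ (Pi.single 0 1)) +
            v 1 • (0, R.mkQ (Pi.single 1 1)) := by
        refine Prod.ext (by simp) ?_
        show R.mkQ v = _
        conv_lhs => rw [hv]
        rw [map_add, map_smul, map_smul]
        simp
      rw [key]
      refine add_mem (add_mem ?_ ?_) ?_ <;>
        exact Submodule.smul_mem _ _ (Submodule.subset_span (by simp))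
  · -- lower bound
    intro S hS
    have hne1 : α.natAbs ≠ 1 := by
      have h2 : (2 : ℤ) ≤ α.natAbs := by rwa [Int.abs_eq_natAbs] at hα
      omega
    obtain ⟨p, hp, hpd⟩ := Nat.exists_prime_and_dvd hne1
    have hpdvd : (p : ℤ) ∣ α :=
      dvd_trans (Int.natCast_dvd_natCast.2 hpd) (Int.natAbs_dvd.2 dvd_rfl)
    haveI : Fact p.Prime := ⟨hp⟩
    let L : ((Fin 2 → ℤ) ⧸ R) →ₗ[ℤ] (Fin 2 → ZMod p) :=
      Submodule.liftQ R (φ p) (range_le_ker α p hpdvd)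
    let c : ℤ →ₗ[ℤ] ZMod p := (Int.castRingHom (ZMod p)).toIntLinearMap
    let G : (ℤ × ((Fin 2 → ℤ) ⧸ R)) →ₗ[ℤ] (ZMod p × (Fin 2 → ZMod p)) := LinearMap.prodMap c L
    have hGsurj : Function.Surjective G := by
      rintro ⟨x, y⟩
      obtain ⟨a, ha⟩ := ZMod.intCast_surjective x
      have hy : ∀ i, ∃ b : ℤ, (b : ZMod p) = y i := fun i => ZMod.intCast_surjective (y i)
      choose b hb using hy
      refine ⟨(a, R.mkQ b), Prod.ext ha ?_⟩
      show L (R.mkQ b) = y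
      rw [show R.mkQ b = Submodule.Quotient.mk b from rfl]
      simp only [L, Submodule.liftQ_apply]
      funext i; exact hb i
    set T : Finset (ZMod p × (Fin 2 → ZMod p)) := S.image G with hT
    have hTspan : Submodule.span ℤ (T : Set (ZMod p × (Fin 2 → ZMod p))) = ⊤ := by
      rw [hT, Finset.coe_image, Submodule.span_image, hS, Submodule.map_top,
        LinearMap.range_eq_top.2 hGsurj]
    have hTspan' : Submodule.span (ZMod p) (T : Set (ZMod p × (Fin 2 → ZMod p))) = ⊤ := by
      rw [eq_top_iff]
      rintro x -
      have hx : x ∈ Submodule.span ℤ (T : Set (ZMod p × (Fin 2 → ZMod p))) := by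
        rw [hTspan]; trivial
      refine Submodule.span_induction (fun y hy => Submodule.subset_span hy)
        (Submodule.zero_mem _) (fun a b _ _ ha hb => Submodule.add_mem _ ha hb) ?_ hx
      intro n a _ ha
      rw [← Int.cast_smul_eq_zsmul (ZMod p)]
      exact Submodule.smul_mem _ _ ha
    have hdim : Module.finrank (ZMod p) (ZMod p × (Fin 2 → ZMod p)) = 3 := by
      rw [Module.finrank_prod, Module.finrank_pi, Module.finrank_self]
      simp
    have h3 : 3 ≤ T.card := by
      have hle := finrank_span_le_card (R := ZMod p) (T : Set (ZMod p × (Fin 2 → ZMod p)))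
      rw [hTspan', finrank_top, hdim] at hle
      simpa using hle
    exact h3.trans Finset.card_image_le
end

section
/- Let α be an integer with 2 ≤ |α|. Consider the presented group G on three generators x, y, t (the images of FreeGroup.of 0, FreeGroup.of 1, FreeGroup.of 2 in PresentedGroup rels) with set of relators rels = {t·x·t⁻¹·x, t·y·t⁻¹·y·x^α, x·y·x⁻¹·y⁻¹} ⊆ FreeGroup (Fin 3). Then G cannot be generated by two elements: for all a, b ∈ G, Subgroup.closure {a, b} ≠ ⊤. -/
/-!
Reducing modulo `n = |α| ≥ 2`, send `x` and `y` to the translations of `(ZMod n)²` by the basis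
vectors and `t` to the point reflection `u ↦ -u`; the relator `t y t⁻¹ y x^α` becomes the
translation by `α e₁ = 0`. So the group surjects onto the generalized dihedral group
`(ZMod n)² ⋊ {±1}`, and it suffices that the latter is not 2-generated. Two translations lie in
the kernel of the sign. Otherwise one of `b`, `a`, `a b⁻¹` is a translation `w`, and both
elements lie in the subgroup generated by the translations in `ℤ w` and a reflection, which is
proper because `(ZMod n)²` is not cyclic.
-/

/-- The relators of the fundamental group of the torus bundle with monodromy
`!![-1, -α; 0, -1]`: with generators `x = of 0`, `y = of 1`, `t = of 2`, the relators are
`t x t⁻¹ x`, `t y t⁻¹ y x^α` and `x y x⁻¹ y⁻¹`. -/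
def torusBundleRels (α : ℤ) : Set (FreeGroup (Fin 3)) :=
  { FreeGroup.of 2 * FreeGroup.of 0 * (FreeGroup.of 2)⁻¹ * FreeGroup.of 0,
    FreeGroup.of 2 * FreeGroup.of 1 * (FreeGroup.of 2)⁻¹ * FreeGroup.of 1 *
      (FreeGroup.of 0) ^ α,
    FreeGroup.of 0 * FreeGroup.of 1 * (FreeGroup.of 0)⁻¹ * (FreeGroup.of 1)⁻¹ }

/-- The generalized dihedral group `V ⋊ {±1}`, where `-1` acts on `V` by negation. -/
@[ext]
structure GenDihedral (V : Type*) where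
  vec : V
  sign : ℤˣ

namespace GenDihedral

variable {V : Type*} [AddCommGroup V]

instance : Mul (GenDihedral V) := ⟨fun g h => ⟨g.vec + g.sign • h.vec, g.sign * h.sign⟩⟩
instance : One (GenDihedral V) := ⟨⟨0, 1⟩⟩
instance : Inv (GenDihedral V) := ⟨fun g => ⟨-(g.sign⁻¹ • g.vec), g.sign⁻¹⟩⟩

@[simp] lemma mul_vec (g h : GenDihedral V) : (g * h).vec = g.vec + g.sign • h.vec := rfl
@[simp] lemma mul_sign (g h : GenDihedral V) : (g * h).sign = g.sign * h.sign := rfl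
@[simp] lemma one_vec : (1 : GenDihedral V).vec = 0 := rfl
@[simp] lemma one_sign : (1 : GenDihedral V).sign = 1 := rfl
@[simp] lemma inv_vec (g : GenDihedral V) : g⁻¹.vec = -(g.sign⁻¹ • g.vec) := rfl
@[simp] lemma inv_sign (g : GenDihedral V) : g⁻¹.sign = g.sign⁻¹ := rfl

instance : Group (GenDihedral V) :=
  Group.ofLeftAxioms
    (fun _ _ _ => by ext <;> simp [smul_add, mul_smul, add_assoc, mul_assoc])
    (fun _ => by ext <;> simp)
    (fun _ => by ext <;> simp)

def signHom : GenDihedral V →* ℤˣ where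
  toFun := sign
  map_one' := rfl
  map_mul' _ _ := rfl

lemma signHom_ker_ne_top : (signHom : GenDihedral V →* ℤˣ).ker ≠ ⊤ := fun h => by
  simpa [signHom] using h.ge (Subgroup.mem_top (⟨0, -1⟩ : GenDihedral V))

lemma mk_one_zpow (v : V) (k : ℤ) : (⟨v, 1⟩ : GenDihedral V) ^ k = ⟨k • v, 1⟩ := by
  induction k using Int.induction_on with
  | zero => ext <;> simp
  | succ k ih => rw [zpow_add_one, ih]; ext <;> simp [add_smul]
  | pred k ih => rw [zpow_sub_one, ih]; ext <;> simp [sub_eq_add_neg, add_smul]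

/-- The subgroup generated by the translations by `L` and the reflection `⟨v, -1⟩`. -/
def reflSubgroup (L : AddSubgroup V) (v : V) : Subgroup (GenDihedral V) where
  carrier := {g | g.vec - (if g.sign = 1 then 0 else v) ∈ L}
  one_mem' := by simp
  mul_mem' := by
    rintro g h hg hh
    rcases Int.units_eq_one_or g.sign with hg1 | hg1 <;>
      rcases Int.units_eq_one_or h.sign with hh1 | hh1 <;>
      simp_all only [Set.mem_ofPred_eq, mul_vec, mul_sign, one_smul, Units.neg_smul, mul_one,
        mul_neg, neg_neg, neg_units_ne_self, ↓reduceIte, sub_zero]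
    · exact L.add_mem hg hh
    · simpa [add_sub_assoc] using L.add_mem hg hh
    · simpa [sub_eq_add_neg, add_right_comm] using L.sub_mem hg hh
    · simpa [sub_eq_add_neg] using L.sub_mem hg hh
  inv_mem' := by
    rintro g hg
    rcases Int.units_eq_one_or g.sign with hg1 | hg1 <;> simp_all

@[simp] lemma mem_reflSubgroup {L : AddSubgroup V} {v : V} {g : GenDihedral V} :
    g ∈ reflSubgroup L v ↔ g.vec - (if g.sign = 1 then 0 else v) ∈ L := Iff.rfl

lemma reflSubgroup_ne_top {L : AddSubgroup V} (hL : L ≠ ⊤) (v : V) :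
    reflSubgroup L v ≠ ⊤ := fun h =>
  hL <| (AddSubgroup.eq_top_iff' L).mpr fun u => by
    simpa using h.ge (Subgroup.mem_top (⟨u, 1⟩ : GenDihedral V))

theorem closure_pair_ne_top (hV : ¬ IsAddCyclic V) (a b : GenDihedral V) :
    Subgroup.closure {a, b} ≠ ⊤ := by
  have hcyc : ∀ w : V, AddSubgroup.zmultiples w ≠ ⊤ := fun w hw =>
    hV (isAddCyclic_iff_exists_zmultiples_eq_top.mpr ⟨w, hw⟩)
  have of_mem_refl : ∀ w v, a ∈ reflSubgroup (.zmultiples w) v →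
      b ∈ reflSubgroup (.zmultiples w) v → Subgroup.closure {a, b} ≠ ⊤ := fun w v ha hb =>
    ne_top_of_le_ne_top (reflSubgroup_ne_top (hcyc w) v) <| (Subgroup.closure_le _).mpr <|
      Set.insert_subset_iff.mpr ⟨ha, Set.singleton_subset_iff.mpr hb⟩
  rcases Int.units_eq_one_or a.sign with ha | ha <;>
    rcases Int.units_eq_one_or b.sign with hb | hb
  · refine ne_top_of_le_ne_top signHom_ker_ne_top (Subgroup.closure_le _ |>.mpr ?_)
    simp [Set.insert_subset_iff, signHom, ha, hb]
  · exact of_mem_refl a.vec b.vec (by simp [ha]) (by simp [hb])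
  · exact of_mem_refl b.vec a.vec (by simp [ha]) (by simp [hb])
  · exact of_mem_refl (a.vec - b.vec) b.vec (by simp [ha]) (by simp [hb])

end GenDihedral

theorem ZMod.not_isAddCyclic_prod_self {n : ℕ} (hn : n ≠ 1) :
    ¬ IsAddCyclic (ZMod n × ZMod n) := by
  simp [AddGroup.isAddCyclic_prod_iff, Nat.card_zmod, hn]

namespace TorusBundle

def dihedralGens (n : ℕ) : Fin 3 → GenDihedral (ZMod n × ZMod n) :=
  ![⟨(1, 0), 1⟩, ⟨(0, 1), 1⟩, ⟨0, -1⟩]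

lemma lift_dihedralGens_eq_one {n : ℕ} {α : ℤ} (hn : (n : ℤ) ∣ α) :
    ∀ r ∈ torusBundleRels α, FreeGroup.lift (dihedralGens n) r = 1 := by
  have hα : (α : ZMod n) = 0 := (ZMod.intCast_zmod_eq_zero_iff_dvd α n).mpr hn
  rintro r (rfl | rfl | rfl) <;> ext <;> simp [dihedralGens, GenDihedral.mk_one_zpow, hα]

def toGenDihedral (α : ℤ) :
    PresentedGroup (torusBundleRels α) →* GenDihedral (ZMod α.natAbs × ZMod α.natAbs) :=
  PresentedGroup.toGroup (lift_dihedralGens_eq_one Int.natAbs_dvd_self)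

lemma toGenDihedral_surjective (α : ℤ) : Function.Surjective (toGenDihedral α) := by
  rintro ⟨⟨u, w⟩, ε⟩
  obtain ⟨k, rfl⟩ := ZMod.intCast_surjective u
  obtain ⟨m, rfl⟩ := ZMod.intCast_surjective w
  refine ⟨PresentedGroup.of 0 ^ k * PresentedGroup.of 1 ^ m *
    PresentedGroup.of 2 ^ (if ε = 1 then 0 else 1 : ℤ), ?_⟩
  rcases Int.units_eq_one_or ε with rfl | rfl <;> ext <;>
    simp [toGenDihedral, dihedralGens, GenDihedral.mk_one_zpow]

end TorusBundle

/-- For `|α| ≥ 2`, the group `⟨x, y, t ∣ t x t⁻¹ x, t y t⁻¹ y x^α, [x,y]⟩` cannot be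
generated by two elements. -/
theorem rank_three_presented_torus_bundle (α : ℤ) (hα : 2 ≤ |α|)
    (a b : PresentedGroup (torusBundleRels α)) :
    Subgroup.closure {a, b} ≠ ⊤ := by
  intro htop
  have hcyc : ¬ IsAddCyclic (ZMod α.natAbs × ZMod α.natAbs) :=
    ZMod.not_isAddCyclic_prod_self (by rw [Int.abs_eq_natAbs] at hα; omega)
  refine GenDihedral.closure_pair_ne_top hcyc (TorusBundle.toGenDihedral α a)
    (TorusBundle.toGenDihedral α b) ?_
  rw [← Set.image_pair, ← MonoidHom.map_closure, htop,
    Subgroup.map_top_of_surjective _ (TorusBundle.toGenDihedral_surjective α)]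
end

section
/- Let a, b be integers and let f : ℕ → ℤ satisfy f 0 = 1, f 1 = 1, and for every k : ℕ, f (2k+2) = a*b*f (2k+1) − f (2k) and f (2k+3) = f (2k+2) − f (2k+1). Let A = !![-1, -a; b, a*b − 1]. Then for every natural number n ≥ 1, Aⁿ = !![-f (2n−2), -a * f (2n−1); b * f (2n−1), f (2n)]. -/
/-- Powers of `A = !![-1, -a; b, a*b - 1]` in terms of the sequence `f` with
`f 0 = f 1 = 1`, `f (n) = a*b*f (n-1) - f (n-2)` for even `n ≥ 2` and
`f n = f (n-1) - f (n-2)` for odd `n ≥ 3`. -/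
theorem pow_eq_f_matrix (a b : ℤ) (f : ℕ → ℤ) (hf0 : f 0 = 1) (hf1 : f 1 = 1)
    (hfe : ∀ k : ℕ, f (2 * k + 2) = a * b * f (2 * k + 1) - f (2 * k))
    (hfo : ∀ k : ℕ, f (2 * k + 3) = f (2 * k + 2) - f (2 * k + 1))
    (A : Matrix (Fin 2) (Fin 2) ℤ) (hA : A = !![-1, -a; b, a * b - 1]) :
    ∀ n : ℕ, 1 ≤ n →
      A ^ n = !![-f (2 * n - 2), -a * f (2 * n - 1); b * f (2 * n - 1), f (2 * n)] := by
  have key : ∀ k : ℕ, A ^ (k + 1) =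
      !![-f (2 * k), -a * f (2 * k + 1); b * f (2 * k + 1), f (2 * k + 2)] := by
    intro k
    induction k with
    | zero =>
      simp only [pow_one, hA]
      rw [show 2 * 0 + 2 = 2 * 0 + 2 from rfl, hfe 0]
      norm_num [hf0, hf1]
    | succ k ih =>
      rw [pow_succ, ih, hA]
      have h1 := hfe k
      have h2 := hfo k
      have h3 := hfe (k + 1)
      have e1 : 2 * (k + 1) = 2 * k + 2 := by ring
      have e2 : 2 * (k + 1) + 1 = 2 * k + 3 := by ring
      have v2 : f (2 * (k + 1)) = a * b * f (2 * k + 1) - f (2 * k) := by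
        rw [e1]; exact h1
      have v3 : f (2 * (k + 1) + 1) =
          (a * b * f (2 * k + 1) - f (2 * k)) - f (2 * k + 1) := by
        rw [e2, h2, h1]
      rw [v3, v2] at h3
      rw [h3, v3, v2, h1]
      ext i j
      fin_cases i <;> fin_cases j <;>
        simp [Matrix.mul_apply, Fin.sum_univ_succ] <;> ring
  intro n hn
  obtain ⟨k, rfl⟩ := Nat.exists_eq_add_of_le hn
  have e : 2 * (1 + k) - 2 = 2 * k := by omega
  have e1 : 2 * (1 + k) - 1 = 2 * k + 1 := by omega
  have e2 : 2 * (1 + k) = 2 * k + 2 := by ring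
  rw [e, e1, e2, add_comm 1 k]
  exact key k
end

section
/- Let a, b be integers and let f : ℕ → ℤ satisfy f 0 = 1, f 1 = 1, and for every k : ℕ, f (2k+2) = a*b*f (2k+1) − f (2k) and f (2k+3) = f (2k+2) − f (2k+1). Let A = !![-1, -a; b, a*b − 1]. Then for every natural number n ≥ 2: if n is odd, ∑_{i=0}^{n} Aⁱ = f n • !![-a*b*f (n−2), -a*f (n−1); b*f (n−1), a*b*f n], and if n is even, ∑_{i=0}^{n} Aⁱ = f n • !![-f (n−2), -a*f (n−1); b*f (n−1), f n]. -/
/-- The geometric sums `I + A + ⋯ + Aⁿ` of `A = !![-1, -a; b, a*b - 1]` in terms of the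
sequence `f` with `f 0 = f 1 = 1`, `f n = a*b*f (n-1) - f (n-2)` for even `n ≥ 2` and
`f n = f (n-1) - f (n-2)` for odd `n ≥ 3`. -/
theorem geom_sum_eq_f_matrix (a b : ℤ) (f : ℕ → ℤ) (hf0 : f 0 = 1) (hf1 : f 1 = 1)
    (hfe : ∀ k : ℕ, f (2 * k + 2) = a * b * f (2 * k + 1) - f (2 * k))
    (hfo : ∀ k : ℕ, f (2 * k + 3) = f (2 * k + 2) - f (2 * k + 1))
    (A : Matrix (Fin 2) (Fin 2) ℤ) (hA : A = !![-1, -a; b, a * b - 1]) :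
    ∀ n : ℕ, 2 ≤ n →
      (Odd n → ∑ i ∈ Finset.range (n + 1), A ^ i =
        f n • !![-(a * b) * f (n - 2), -a * f (n - 1); b * f (n - 1), a * b * f n]) ∧
      (Even n → ∑ i ∈ Finset.range (n + 1), A ^ i =
        f n • !![-f (n - 2), -a * f (n - 1); b * f (n - 1), f n]) := by
  -- the quadratic invariant
  have key : ∀ k : ℕ, f (2*k+2)^2 - a*b*f (2*k+1)*f (2*k+3) = 1 := by
    intro k
    induction k with
    | zero =>
      have h2 := hfe 0; have h3 := hfo 0
      simp only [Nat.mul_zero, Nat.zero_add] at h2 h3 ⊢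
      rw [h3, h2, hf0, hf1]; ring
    | succ k ih =>
      have h4 : f (2*(k+1)+2) = a*b*f (2*k+3) - f (2*k+2) := by
        have := hfe (k+1)
        rwa [(by ring : 2*(k+1)+1 = 2*k+3)] at this
      have h5 : f (2*(k+1)+3) = f (2*(k+1)+2) - f (2*k+3) := by
        have := hfo (k+1)
        rwa [(by ring : 2*(k+1)+1 = 2*k+3)] at this
      have hz := hfo k
      rw [h5, h4, (by ring : 2*(k+1)+1 = 2*k+3)]
      linear_combination ih + a*b*f (2*k+3) * hz
  have main : ∀ k : ℕ,
      (∑ i ∈ Finset.range (2*k+2 + 1), A ^ i =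
        f (2*k+2) • !![-f (2*k), -a * f (2*k+1); b * f (2*k+1), f (2*k+2)]) ∧
      (∑ i ∈ Finset.range (2*k+3 + 1), A ^ i =
        f (2*k+3) • !![-(a*b) * f (2*k+1), -a * f (2*k+2); b * f (2*k+2), a*b*f (2*k+3)]) := by
    intro k
    induction k with
    | zero =>
      have h2 := hfe 0; have h3 := hfo 0
      simp only [Nat.mul_zero, Nat.zero_add] at h2 h3 ⊢
      constructor
      · rw [Finset.sum_range_succ, Finset.sum_range_succ, Finset.sum_range_one, hA]
        ext i j
        fin_cases i <;> fin_cases j <;>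
          simp [Matrix.mul_apply, Fin.sum_univ_two, Matrix.one_apply, Matrix.add_apply,
            pow_succ, h2, hf0, hf1] <;> ring
      · rw [Finset.sum_range_succ, Finset.sum_range_succ, Finset.sum_range_succ,
          Finset.sum_range_one, hA]
        ext i j
        fin_cases i <;> fin_cases j <;>
          simp [Matrix.mul_apply, Fin.sum_univ_two, Matrix.one_apply, Matrix.add_apply,
            pow_succ, h3, h2, hf0, hf1] <;> ring
    | succ k ih =>
      have hz := hfo k
      have hy : f (2*k+4) = a*b*f (2*k+3) - f (2*k+2) := by
        have := hfe (k+1)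
        rwa [(by ring : 2*(k+1)+1 = 2*k+3), (by ring : 2*(k+1)+2 = 2*k+4)] at this
      have hw : f (2*k+5) = f (2*k+4) - f (2*k+3) := by
        have := hfo (k+1)
        rwa [(by ring : 2*(k+1)+1 = 2*k+3), (by ring : 2*(k+1)+2 = 2*k+4),
          (by ring : 2*(k+1)+3 = 2*k+5)] at this
      have hk := key k
      rw [(by ring : 2*(k+1)+3 = 2*k+5), (by ring : 2*(k+1)+2 = 2*k+4),
        (by ring : 2*(k+1)+1 = 2*k+3), (by ring : 2*(k+1) = 2*k+2)]
      set x := f (2*k+1) with hxd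
      set y := f (2*k+2) with hyd
      set z := f (2*k+3) with hzd
      set w := f (2*k+4) with hwd
      set v := f (2*k+5) with hvd
      have hk' : a*b*z^2 - y*w = 1 := by
        linear_combination hk + a*b*z * hz - y * hy
      have e4 : ∑ i ∈ Finset.range (2*k+4 + 1), A ^ i =
          A * ∑ i ∈ Finset.range (2*k+3 + 1), A ^ i + 1 := geom_sum_succ
      have e5 : ∑ i ∈ Finset.range (2*k+5 + 1), A ^ i =
          A * ∑ i ∈ Finset.range (2*k+4 + 1), A ^ i + 1 := geom_sum_succ
      have S4 : ∑ i ∈ Finset.range (2*k+4 + 1), A ^ i =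
          w • !![-y, -a * z; b * z, w] := by
        rw [e4, ih.2, hA]
        ext i j
        fin_cases i <;> fin_cases j <;>
          simp [Matrix.mul_apply, Fin.sum_univ_two, Matrix.one_apply, Matrix.add_apply]
        · linear_combination y*hy - hk
        · linear_combination a*z*hy
        · linear_combination -b*z*hy - a*b^2*z*hz
        · linear_combination -hk - a*b*z*hz - (w + a*b*z - y)*hy
      have S5 : ∑ i ∈ Finset.range (2*k+5 + 1), A ^ i =
          v • !![-(a*b) * z, -a * w; b * w, a*b*v] := by
        rw [e5, S4, hA]
        ext i j
        fin_cases i <;> fin_cases j <;>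
          simp [Matrix.mul_apply, Fin.sum_univ_two, Matrix.one_apply, Matrix.add_apply]
        · linear_combination -hk' + a*b*z*hw
        · linear_combination a*w*hw
        · linear_combination -b*w*hw - b*w*hy
        · linear_combination -hk' - w*hy - a*b*(v+w-z)*hw
      exact ⟨S4, S5⟩
  intro n hn
  constructor
  · rintro ⟨m, hm⟩
    obtain ⟨k, rfl⟩ : ∃ k, n = 2*k+3 := ⟨m - 1, by omega⟩
    have h := (main k).2
    rwa [(by omega : 2*k+3-2 = 2*k+1), (by omega : 2*k+3-1 = 2*k+2)]
  · rintro ⟨m, hm⟩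
    obtain ⟨k, rfl⟩ : ∃ k, n = 2*k+2 := ⟨m - 1, by omega⟩
    have h := (main k).1
    rwa [(by omega : 2*k+2-2 = 2*k), (by omega : 2*k+2-1 = 2*k+1)]
end

section
/- Let a, b be integers with 6 ≤ |a*b|, and let f : ℕ → ℤ satisfy f 0 = 1, f 1 = 1, and for every k : ℕ, f (2k+2) = a*b*f (2k+1) − f (2k) and f (2k+3) = f (2k+2) − f (2k+1). Then for every natural number n ≥ 2, 1 < |f n|. -/
/-- If `|a*b| ≥ 6`, then the sequence `f` with `f 0 = f 1 = 1`,
`f n = a*b*f (n-1) - f (n-2)` for even `n ≥ 2` and `f n = f (n-1) - f (n-2)` for odd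
`n ≥ 3` satisfies `|f n| > 1` for all `n ≥ 2`. -/
theorem abs_f_gt_one (a b : ℤ) (hab : 6 ≤ |a * b|) (f : ℕ → ℤ) (hf0 : f 0 = 1)
    (hf1 : f 1 = 1)
    (hfe : ∀ k : ℕ, f (2 * k + 2) = a * b * f (2 * k + 1) - f (2 * k))
    (hfo : ∀ k : ℕ, f (2 * k + 3) = f (2 * k + 2) - f (2 * k + 1)) :
    ∀ n : ℕ, 2 ≤ n → 1 < |f n| := by
  have key : ∀ k : ℕ, 1 ≤ |f (2 * k + 1)| ∧ 2 * |f (2 * k + 1)| + 1 ≤ |f (2 * k + 2)| := by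
    intro k
    induction k with
    | zero =>
      have h2 : f 2 = a * b - 1 := by
        have := hfe 0
        norm_num [hf0, hf1] at this
        linarith
      constructor
      · simp [hf1]
      · have h3 := abs_sub_abs_le_abs_sub (a * b) (1 : ℤ)
        simp only [abs_one] at h3
        norm_num [hf1, h2]
        linarith
    | succ k ih =>
      obtain ⟨h1, h2⟩ := ih
      have e1 := hfo k
      have e2 := hfe (k + 1)
      rw [show 2 * (k + 1) + 2 = 2 * k + 4 from by ring,
        show 2 * (k + 1) + 1 = 2 * k + 3 from by ring,
        show 2 * (k + 1) = 2 * k + 2 from by ring] at e2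
      rw [show 2 * (k + 1) + 1 = 2 * k + 3 from by ring,
        show 2 * (k + 1) + 2 = 2 * k + 4 from by ring]
      set u := f (2 * k + 1) with hu
      set v := f (2 * k + 2) with hv
      have habs1 : |v| - |u| ≤ |v - u| := abs_sub_abs_le_abs_sub v u
      have habs2 : |v - u| ≤ |v| + |u| := by
        have := abs_add_le v (-u); simpa [sub_eq_add_neg] using this
      have habs3 : |a * b * (v - u)| - |v| ≤ |a * b * (v - u) - v| :=
        abs_sub_abs_le_abs_sub _ v
      have habs4 : |a * b * (v - u)| = |a * b| * |v - u| := abs_mul _ _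
      have habs5 : 6 * |v - u| ≤ |a * b| * |v - u| :=
        mul_le_mul_of_nonneg_right hab (abs_nonneg _)
      rw [e1, e2]
      rw [e1]
      constructor
      · linarith
      · linarith
  intro n hn
  obtain ⟨k, hk⟩ : ∃ k, n = 2 * k + 2 ∨ n = 2 * k + 3 := ⟨(n - 2) / 2, by omega⟩
  obtain ⟨h1, h2⟩ := key k
  rcases hk with rfl | rfl
  · linarith
  · rw [hfo k]
    have := abs_sub_abs_le_abs_sub (f (2 * k + 2)) (f (2 * k + 1))
    linarith
end

section
/- Let A be a 2×2 integer matrix with det A = 1, and let L be a ℤ-submodule of Fin 2 → ℤ such that the quotient (Fin 2 → ℤ) ⧸ L is finite and nontrivial index is allowed. Then the following are equivalent: (1) L is invariant under A, i.e. Submodule.map A.mulVecLin L ≤ L; (2) there exist a 2×2 integer matrix B with det B = 1 and a ℤ-linear isomorphism h : (Fin 2 → ℤ) ≃ₗ[ℤ] L such that for every v : Fin 2 → ℤ, the image in Fin 2 → ℤ of h (B.mulVecLin v) equals A.mulVecLin applied to the image of h v. -/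
/-!
A finite-index subgroup `L` of `ℤⁿ` has rank `n`, so it is itself a copy of `ℤⁿ`; in a basis
of `L` an `A`-invariant `L` carries the restriction of `A` as a matrix `B`. If `M` is the
(injective, hence nonsingular) matrix whose columns are that basis, then `A * M = M * B`, so
`det B = det A`. Conversely an intertwining `h` exhibits `A` mapping `L = range h` into itself.
-/

namespace Matrix

variable {ι R : Type*} [Fintype ι]

theorem det_ne_zero_of_mulVec_injective [DecidableEq ι] [CommRing R] [IsDomain R]
    {M : Matrix ι ι R} (hM : Function.Injective M.mulVec) : M.det ≠ 0 := fun hdet ↦ by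
  obtain ⟨v, hv, hMv⟩ := exists_mulVec_eq_zero_iff.mpr hdet
  exact hv (hM (hMv.trans M.mulVec_zero.symm))

theorem det_eq_of_mul_eq_mul [DecidableEq ι] [CommRing R] [IsDomain R] {A B M : Matrix ι ι R}
    (hM : Function.Injective M.mulVec) (h : A * M = M * B) : A.det = B.det := by
  have hdet := congrArg det h
  rw [det_mul, det_mul, mul_comm] at hdet
  exact mul_left_cancel₀ (det_ne_zero_of_mulVec_injective hM) hdet

theorem exists_det_eq_of_map_mulVecLin_le [DecidableEq ι] [CommRing R] [IsDomain R]
    {L : Submodule R (ι → R)} (h : (ι → R) ≃ₗ[R] L) {A : Matrix ι ι R}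
    (hA : L.map A.mulVecLin ≤ L) :
    ∃ B : Matrix ι ι R, B.det = A.det ∧
      ∀ v, (h (B.mulVecLin v) : ι → R) = A.mulVecLin (h v) := by
  let B := LinearMap.toMatrix' (h.symm.toLinearMap ∘ₗ
    A.mulVecLin.restrict (fun x hx ↦ hA ⟨x, hx, rfl⟩) ∘ₗ h.toLinearMap)
  have hB (v : ι → R) : (h (B.mulVecLin v) : ι → R) = A.mulVecLin (h v) := by
    simp [B, ← Matrix.toLin'_apply']
  let M := LinearMap.toMatrix' (L.subtype ∘ₗ h.toLinearMap)
  have hM (v : ι → R) : M *ᵥ v = h v := by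
    simp [M]
  refine ⟨B, (det_eq_of_mul_eq_mul (M := M) ?_ ?_).symm, hB⟩
  · exact fun v w hvw ↦ h.injective (Subtype.ext ((hM v).symm.trans (hvw.trans (hM w))))
  · refine toLin'.injective (LinearMap.ext fun v ↦ ?_)
    simp only [toLin'_apply', mulVecLin_mul, LinearMap.comp_apply, mulVecLin_apply, hM, ← hB]

theorem map_mulVecLin_le_of_intertwining [CommSemiring R] {L : Submodule R (ι → R)}
    (h : (ι → R) ≃ₗ[R] L) {A B : Matrix ι ι R}
    (hB : ∀ v, (h (B.mulVecLin v) : ι → R) = A.mulVecLin (h v)) :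
    L.map A.mulVecLin ≤ L := by
  rintro _ ⟨x, hx, rfl⟩
  obtain ⟨v, hv⟩ := h.surjective ⟨x, hx⟩
  rw [show x = h v from congrArg Subtype.val hv.symm, ← hB]
  exact (h _).2

end Matrix

theorem Submodule.nonempty_linearEquiv_of_finite_quotient {ι : Type*} [Fintype ι]
    (L : Submodule ℤ (ι → ℤ)) [Finite ((ι → ℤ) ⧸ L)] : Nonempty ((ι → ℤ) ≃ₗ[ℤ] L) := by
  have : L.toAddSubgroup.FiniteIndex :=
    @AddSubgroup.finiteIndex_of_finite_quotient _ _ _ ‹Finite ((ι → ℤ) ⧸ L)›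
  exact ⟨LinearEquiv.ofFinrankEq _ _ (AddSubgroup.finrank_eq_of_finiteIndex L.toAddSubgroup).symm⟩

/-- For `A ∈ SL(2,ℤ)` and a finite-index ℤ-submodule `L ≤ ℤ²`, `L` is `A`-invariant if and
only if there are `B ∈ SL(2,ℤ)` and a ℤ-linear isomorphism `h : ℤ² ≃ L` intertwining the
action of `B` on `ℤ²` with the action of `A` on `L`. -/
theorem invariant_submodule_iff_conjugate_matrix (A : Matrix (Fin 2) (Fin 2) ℤ)
    (hA : A.det = 1) (L : Submodule ℤ (Fin 2 → ℤ)) (hL : Finite ((Fin 2 → ℤ) ⧸ L)) :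
    Submodule.map A.mulVecLin L ≤ L ↔
      ∃ (B : Matrix (Fin 2) (Fin 2) ℤ) (h : (Fin 2 → ℤ) ≃ₗ[ℤ] L), B.det = 1 ∧
        ∀ v : Fin 2 → ℤ, ((h (B.mulVecLin v) : Fin 2 → ℤ)) = A.mulVecLin (h v : Fin 2 → ℤ) := by
  constructor
  · intro hAL
    obtain ⟨h⟩ := L.nonempty_linearEquiv_of_finite_quotient
    obtain ⟨B, hBA, hB⟩ := Matrix.exists_det_eq_of_map_mulVecLin_le h hAL
    exact ⟨B, h, hBA.trans hA, hB⟩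
  · rintro ⟨B, h, -, hB⟩
    exact Matrix.map_mulVecLin_le_of_intertwining h hB
end

section
/- Let m, n, d, i₀ be natural numbers with 0 < m, 0 < n, 0 < d, m ∣ n, d * m ∣ n, Nat.gcd d i₀ = 1, and i₀ < d. Set ρ := i₀ * (n / d) and e := (i₀ : ℤ) * ((n / (d * m) : ℕ) : ℤ), and let L be the ℤ-submodule of Fin 2 → ℤ spanned by ![(n : ℤ), 0] and ![-(ρ : ℤ), (m : ℤ)]. Then for a 2×2 integer matrix A with det A = 1, one has Submodule.map A.mulVecLin L ≤ L if and only if there exist integers p, k, r, s such that A = !![p − e*k, ((n / m : ℕ) : ℤ) * r − e*s + e*(p − e*k); k, s + e*k]. -/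
/-- The subgroup `⟨xⁿ, x^{-ρ} y^m⟩ ≤ ℤ²` (with `ρ = i₀ n / d`) is invariant under
`A ∈ SL(2,ℤ)` if and only if `A` has the explicit form of Lemma 4.7, where
`e = i₀ · n/(dm)`. -/
theorem covering_extends_iff_matrix_form (m n d i₀ : ℕ) (hm : 0 < m) (hn : 0 < n)
    (hd : 0 < d) (hmn : m ∣ n) (hdm : d * m ∣ n) (hcop : Nat.gcd d i₀ = 1) (hi₀ : i₀ < d)
    (A : Matrix (Fin 2) (Fin 2) ℤ) (hA : A.det = 1) :
    Submodule.map A.mulVecLin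
        (Submodule.span ℤ
          {![(n : ℤ), 0], ![-(((i₀ * (n / d) : ℕ)) : ℤ), (m : ℤ)]}) ≤
      Submodule.span ℤ {![(n : ℤ), 0], ![-(((i₀ * (n / d) : ℕ)) : ℤ), (m : ℤ)]} ↔
    ∃ p k r s : ℤ,
      A = !![p - ((i₀ : ℤ) * ((n / (d * m) : ℕ) : ℤ)) * k,
             ((n / m : ℕ) : ℤ) * r - ((i₀ : ℤ) * ((n / (d * m) : ℕ) : ℤ)) * s +
               ((i₀ : ℤ) * ((n / (d * m) : ℕ) : ℤ)) *
                 (p - ((i₀ : ℤ) * ((n / (d * m) : ℕ) : ℤ)) * k);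
             k, s + ((i₀ : ℤ) * ((n / (d * m) : ℕ) : ℤ)) * k] := by
  obtain ⟨q, hq⟩ := hdm
  have hdm' : 0 < d * m := Nat.mul_pos hd hm
  have hnd : n / d = m * q := by rw [hq, mul_assoc, Nat.mul_div_cancel_left _ hd]
  have hndm : n / (d * m) = q := by rw [hq, Nat.mul_div_cancel_left _ hdm']
  have hnm : n / m = d * q := by
    rw [hq, show d * m * q = m * (d * q) by ring, Nat.mul_div_cancel_left _ hm]
  have hm0 : (m : ℤ) ≠ 0 := by exact_mod_cast hm.ne'
  rw [hnd, hndm, hnm, hq]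
  rw [Submodule.map_span, Submodule.span_le, Set.image_pair,
    Set.insert_subset_iff, Set.singleton_subset_iff]
  simp only [SetLike.mem_coe, Submodule.mem_span_pair, Matrix.mulVecLin_apply,
    Matrix.mulVec, dotProduct, Fin.sum_univ_two, funext_iff, Fin.forall_fin_two,
    Matrix.cons_val_zero, Matrix.cons_val_one, Matrix.head_cons, Pi.add_apply,
    Pi.smul_apply, smul_eq_mul]
  push_cast
  constructor
  · rintro ⟨⟨a₁, b₁, h10, h11⟩, a₂, b₂, h20, h21⟩
    have hb₂ : b₂ = A 1 1 - (i₀ : ℤ) * q * A 1 0 := by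
      have : (m : ℤ) * b₂ = (m : ℤ) * (A 1 1 - (i₀ : ℤ) * q * A 1 0) := by
        linear_combination h21
      exact mul_left_cancel₀ hm0 this
    have ha₂ : (d : ℤ) * q * a₂ =
        A 0 1 - (i₀ : ℤ) * q * A 0 0 + (i₀ : ℤ) * q * (A 1 1 - (i₀ : ℤ) * q * A 1 0) := by
      have : (m : ℤ) * ((d : ℤ) * q * a₂) = (m : ℤ) *
          (A 0 1 - (i₀ : ℤ) * q * A 0 0 + (i₀ : ℤ) * q * (A 1 1 - (i₀ : ℤ) * q * A 1 0)) := by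
        linear_combination h20 + (i₀ : ℤ) * q * h21
      exact mul_left_cancel₀ hm0 this
    refine ⟨A 0 0 + (i₀ : ℤ) * q * A 1 0, A 1 0, a₂, A 1 1 - (i₀ : ℤ) * q * A 1 0, ?_⟩
    ext i j
    fin_cases i <;> fin_cases j <;>
      simp [Matrix.cons_val_zero, Matrix.cons_val_one] <;> linarith [ha₂]
  · rintro ⟨p, k, r, s, rfl⟩
    refine ⟨⟨p, k * ((d : ℤ) * q), ?_, ?_⟩, r, s, ?_, ?_⟩ <;>
      simp [Matrix.cons_val_zero, Matrix.cons_val_one] <;> ring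
end

section
/- Let m, n be positive natural numbers with m ∣ n, let i₀, ℓ, b be integers, and set P := !![(n : ℤ), -(i₀ * ℓ * (m : ℤ)); 0, (m : ℤ)] and B := !![-1, -1; b, b − 1]. Suppose A is a 2×2 integer matrix satisfying A * P = P * B. Then (n : ℤ) divides b * m, and writing a for the integer with b * (m : ℤ) = a * (n : ℤ), one has !![1, i₀*ℓ; 0, 1] * A * !![1, -(i₀*ℓ); 0, 1] = !![-1, -((n / m : ℕ) : ℤ); a, a * ((n / m : ℕ) : ℤ) − 1]. -/
/-- If `A * P = P * B` where `P = !![n, -i₀ℓm; 0, m]` encodes the invariant subgroup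
`⟨xⁿ, x^{-i₀mℓ} y^m⟩` and `B = !![-1, -1; b, b-1]`, then `n ∣ b*m` and, writing
`b*m = a*n`, the matrix `A` is conjugate in `GL(2,ℤ)` to `!![-1, -(n/m); a, a(n/m)-1]`. -/
theorem genus_lowering_monodromy_form (m n : ℕ) (hm : 0 < m) (hn : 0 < n) (hmn : m ∣ n)
    (i₀ ℓ b : ℤ) (A : Matrix (Fin 2) (Fin 2) ℤ)
    (hAPB : A * !![(n : ℤ), -(i₀ * ℓ * (m : ℤ)); 0, (m : ℤ)] =
      !![(n : ℤ), -(i₀ * ℓ * (m : ℤ)); 0, (m : ℤ)] * !![-1, -1; b, b - 1]) :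
    (n : ℤ) ∣ b * (m : ℤ) ∧
      ∀ a : ℤ, b * (m : ℤ) = a * (n : ℤ) →
        !![1, i₀ * ℓ; 0, 1] * A * !![1, -(i₀ * ℓ); 0, 1] =
          !![-1, -((n / m : ℕ) : ℤ); a, a * ((n / m : ℕ) : ℤ) - 1] := by
  have hmz : (m : ℤ) ≠ 0 := by exact_mod_cast hm.ne'
  have hnz : (n : ℤ) ≠ 0 := by exact_mod_cast hn.ne'
  set k : ℤ := ((n / m : ℕ) : ℤ) with hkdef
  have hmk : (m : ℤ) * k = (n : ℤ) := by
    rw [hkdef]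
    exact_mod_cast Nat.mul_div_cancel' hmn
  set t : ℤ := i₀ * ℓ with htdef
  have e00 := congrFun (congrFun hAPB 0) 0
  have e01 := congrFun (congrFun hAPB 0) 1
  have e10 := congrFun (congrFun hAPB 1) 0
  have e11 := congrFun (congrFun hAPB 1) 1
  simp [Matrix.mul_apply, Fin.sum_univ_two] at e00 e01 e10 e11
  -- e10 : A 1 0 * n + A 1 1 * 0 = ...
  constructor
  · exact ⟨A 1 0, by linarith [e10]⟩
  · intro a ha
    have hr : A 1 0 = a := by
      have : A 1 0 * (n : ℤ) = a * (n : ℤ) := by linarith [e10]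
      exact mul_right_cancel₀ hnz this
    have hp : A 0 0 = -1 - t * a := by
      have : A 0 0 * (n : ℤ) = (-1 - t * a) * (n : ℤ) := by
        have hmb : (m : ℤ) * b = a * n := by linarith [ha]
        linear_combination e00 - t * hmb
      exact mul_right_cancel₀ hnz this
    have hs : A 1 1 = b - 1 + a * t := by
      have : A 1 1 * (m : ℤ) = (b - 1 + a * t) * (m : ℤ) := by
        rw [hr] at e11; linear_combination e11
      exact mul_right_cancel₀ hmz this
    have hbk : b = a * k := by
      have : b * (m : ℤ) = (a * k) * (m : ℤ) := by rw [ha, ← hmk]; ring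
      exact mul_right_cancel₀ hmz this
    have hq : A 0 1 = A 0 0 * t - k - t * (b - 1) := by
      have : A 0 1 * (m : ℤ) = (A 0 0 * t - k - t * (b - 1)) * (m : ℤ) := by
        linear_combination e01 + hmk
      exact mul_right_cancel₀ hmz this
    rw [hp] at hq
    rw [Matrix.eta_fin_two A, hp, hq, hr, hs, hbk]
    ext i j
    fin_cases i <;> fin_cases j <;>
      simp [Matrix.mul_apply, Fin.sum_univ_two] <;> ring
end
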